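/- Fix a finite nonempty index set V, finite nonempty label type L, a region family 𝓡 with a region graph E, ε > 0, C ≥ 0, a finite training set S and finite feature index set K, with region losses ℓ_{s,r}, true region labels y_{s,r}, and region features φ_{k,r}(s,·) as data. The low-dimensional structured prediction objective J(w,λ) = ∑_{s∈S} ∑_{r∈𝓡} [ ε·log(∑_{z∈Y_r} exp(θ_{s,r}^λ(z;w)/ε)) − θ_{s,r}^λ(y_{s,r};w) ] + (C/2)∑_{k∈K} w_k², where θ_{s,r}(z;w) = ℓ_{s,r}(z) + ∑_k w_k φ_{k,r}(s,z) and θ_{s,r}^λ(z;w) = θ_{s,r}(z;w) + ∑_{c∈C(r)} λ_{s,c→r}(z|_c) − ∑_{p∈P(r)} λ_{s,r→p}(z), is a jointly convex function of (w, λ) on all of ℝ^K × (message space). -/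

import Mathlib

/-!
For fixed `s` and `r`, the reparametrized potential `θ^λ_{s,r}(·; w)` depends affinely on `(w, λ)`,
so each summand of `J` is the convex function `v ↦ ε log ∑_z exp (v z / ε) - v y` composed with an
affine map. Convexity of log-sum-exp comes from convexity of `exp`: after normalising `u` and `v`
so that `∑ exp` equals `1`, the bound `exp (a s + b t) ≤ a exp s + b exp t` sums to `1`.
The regulariser is a nonnegative multiple of a sum of squares of coordinates.
-/

open Real Finset Set

section Convexity

variable {𝕜 E F β ι : Type*}

theorem convexOn_finset_sum [Semiring 𝕜] [PartialOrder 𝕜] [AddCommMonoid E] [SMul 𝕜 E]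
    [AddCommMonoid β] [PartialOrder β] [IsOrderedAddMonoid β] [DistribMulAction 𝕜 β]
    {s : Set E} (t : Finset ι) {f : ι → E → β} (hf : ∀ i ∈ t, ConvexOn 𝕜 s (f i))
    (hs : Convex 𝕜 s) : ConvexOn 𝕜 s (fun x => ∑ i ∈ t, f i x) := by
  classical
  induction t using Finset.induction_on with
  | empty => exact ⟨hs, fun _ _ _ _ a b _ _ _ => by simp⟩
  | insert j t hj ih =>
    simp only [sum_insert hj]
    exact (hf j (mem_insert_self j t)).add (ih fun i hi => hf i (mem_insert_of_mem hi))

theorem ConvexOn.comp_of_map_add_smul [Semiring 𝕜] [PartialOrder 𝕜] [AddCommMonoid E]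
    [AddCommMonoid F] [SMul 𝕜 E] [SMul 𝕜 F] [AddCommMonoid β] [PartialOrder β] [SMul 𝕜 β]
    {g : F → β} (hg : ConvexOn 𝕜 univ g) {f : E → F}
    (hf : ∀ x y (a b : 𝕜), a + b = 1 → f (a • x + b • y) = a • f x + b • f y) :
    ConvexOn 𝕜 univ (g ∘ f) :=
  ⟨convex_univ, fun x _ y _ a b ha hb hab => by
    simpa only [Function.comp_apply, hf x y a b hab] using hg.2 trivial trivial ha hb hab⟩

variable [Fintype ι] [Nonempty ι]

theorem sum_exp_sub_log_sum_exp (u : ι → ℝ) :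
    ∑ i, exp (u i - log (∑ j, exp (u j))) = 1 := by
  have hpos : 0 < ∑ j, exp (u j) := sum_pos (fun j _ => exp_pos (u j)) univ_nonempty
  simp only [exp_sub, exp_log hpos, ← sum_div, div_self hpos.ne']

theorem convexOn_log_sum_exp : ConvexOn ℝ univ (fun u : ι → ℝ => log (∑ i, exp (u i))) := by
  refine ⟨convex_univ, fun u _ v _ a b ha hb hab => ?_⟩
  set A := log (∑ i, exp (u i))
  set B := log (∑ i, exp (v i))
  have hbound : ∑ i, exp ((a • u + b • v) i) / exp (a * A + b * B) ≤ 1 := calc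
    _ = ∑ i, exp (a * (u i - A) + b * (v i - B)) := by
        refine sum_congr rfl fun i _ => ?_
        rw [← exp_sub]
        congr 1
        simp only [Pi.add_apply, Pi.smul_apply, smul_eq_mul]
        ring
    _ ≤ ∑ i, (a * exp (u i - A) + b * exp (v i - B)) :=
        sum_le_sum fun i _ => convexOn_exp.2 trivial trivial ha hb hab
    _ = 1 := by
        rw [sum_add_distrib, ← mul_sum, ← mul_sum, sum_exp_sub_log_sum_exp,
          sum_exp_sub_log_sum_exp, mul_one, mul_one, hab]
  rw [← sum_div, div_le_one (exp_pos _)] at hbound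
  exact (log_le_iff_le_exp (sum_pos (fun i _ => exp_pos _) univ_nonempty)).2 hbound

theorem convexOn_mul_log_sum_exp_div {ε : ℝ} (hε : 0 ≤ ε) :
    ConvexOn ℝ univ (fun v : ι → ℝ => ε * log (∑ i, exp (v i / ε))) := by
  have hscale : ConvexOn ℝ univ (fun v : ι → ℝ => log (∑ i, exp (v i / ε))) :=
    convexOn_log_sum_exp.comp_of_map_add_smul fun x y a b _ => by
      ext i
      simp only [Pi.add_apply, Pi.smul_apply, smul_eq_mul]
      ring
  exact hscale.smul hε

theorem convexOn_mul_log_sum_exp_div_sub_apply {ε : ℝ} (hε : 0 ≤ ε) (y : ι) :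
    ConvexOn ℝ univ (fun v : ι → ℝ => ε * log (∑ i, exp (v i / ε)) - v y) :=
  (convexOn_mul_log_sum_exp_div hε).sub ((LinearMap.proj y).concaveOn convex_univ)

end Convexity

namespace Stmt17

variable {V L S K : Type*}

/-- Restriction of a partial label `z : ↥r → L` to a subregion `c ⊆ r`
(arbitrary when `c ⊄ r`). -/
noncomputable def res [DecidableEq V] [Nonempty L] (c r : Finset V) (z : ↥r → L) : ↥c → L :=
  if h : c ⊆ r then fun i => z ⟨i.1, h i.2⟩ else fun _ => Classical.arbitrary L

def parents [DecidableEq V] (E : Finset (Finset V × Finset V)) (r : Finset V) :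
    Finset (Finset V) :=
  (E.filter (fun e => e.1 = r)).image Prod.snd

def children [DecidableEq V] (E : Finset (Finset V × Finset V)) (r : Finset V) :
    Finset (Finset V) :=
  (E.filter (fun e => e.2 = r)).image Prod.fst

variable [DecidableEq V] [Fintype L] [Nonempty L] [Fintype K]

/-- The potential `θ_{s,r}(z;w) = ℓ_{s,r}(z) + ∑_k w_k φ_{k,r}(s,z)`. -/
noncomputable def pot (ℓ : S → (r : Finset V) → (↥r → L) → ℝ)
    (φ : K → S → (r : Finset V) → (↥r → L) → ℝ) (w : K → ℝ)
    (s : S) (r : Finset V) (z : ↥r → L) : ℝ :=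
  ℓ s r z + ∑ k, w k * φ k s r z

/-- The reparametrized potential `θ_{s,r}^λ(z;w)`. -/
noncomputable def repot (ℓ : S → (r : Finset V) → (↥r → L) → ℝ)
    (φ : K → S → (r : Finset V) → (↥r → L) → ℝ)
    (E : Finset (Finset V × Finset V)) (w : K → ℝ)
    (lam : S → (r p : Finset V) → (↥r → L) → ℝ)
    (s : S) (r : Finset V) (z : ↥r → L) : ℝ :=
  pot ℓ φ w s r z + (∑ c ∈ children E r, lam s c r (res c r z))
    - ∑ p ∈ parents E r, lam s r p z

noncomputable def J [Fintype S] (ℓ : S → (r : Finset V) → (↥r → L) → ℝ)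
    (ytrain : S → V → L)
    (φ : K → S → (r : Finset V) → (↥r → L) → ℝ)
    (E : Finset (Finset V × Finset V)) (𝓡 : Finset (Finset V)) (ε C : ℝ)
    (w : K → ℝ) (lam : S → (r p : Finset V) → (↥r → L) → ℝ) : ℝ :=
  (∑ s, ∑ r ∈ 𝓡,
      (ε * Real.log (∑ z : ↥r → L, Real.exp (repot ℓ φ E w lam s r z / ε))
        - repot ℓ φ E w lam s r (fun i => ytrain s i)))
    + (C / 2) * ∑ k, (w k) ^ 2

omit [Fintype L] in
theorem repot_smul_add_smul (ℓ : S → (r : Finset V) → (↥r → L) → ℝ)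
    (φ : K → S → (r : Finset V) → (↥r → L) → ℝ) (E : Finset (Finset V × Finset V))
    {a b : ℝ} (hab : a + b = 1) (w w' : K → ℝ) (lam lam' : S → (r p : Finset V) → (↥r → L) → ℝ)
    (s : S) (r : Finset V) :
    repot ℓ φ E (a • w + b • w') (a • lam + b • lam') s r
      = a • repot ℓ φ E w lam s r + b • repot ℓ φ E w' lam' s r := by
  ext z
  simp only [repot, pot, Pi.add_apply, Pi.smul_apply, smul_eq_mul, add_mul, mul_add,
    Finset.sum_add_distrib, Finset.mul_sum, mul_sub, mul_assoc]
  linear_combination ℓ s r z * hab.symm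

theorem J_convexOn_general [Fintype S]
    (𝓡 : Finset (Finset V))
    (E : Finset (Finset V × Finset V))
    (ε C : ℝ) (hε : 0 < ε) (hC : 0 ≤ C)
    (ℓ : S → (r : Finset V) → (↥r → L) → ℝ)
    (ytrain : S → V → L)
    (φ : K → S → (r : Finset V) → (↥r → L) → ℝ) :
    ConvexOn ℝ Set.univ
      (fun wl : (K → ℝ) × (S → (r p : Finset V) → (↥r → L) → ℝ) =>
        J ℓ ytrain φ E 𝓡 ε C wl.1 wl.2) := by
  have hregion : ∀ s r, ConvexOn ℝ univ
      (fun wl : (K → ℝ) × (S → (r p : Finset V) → (↥r → L) → ℝ) =>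
        ε * log (∑ z, exp (repot ℓ φ E wl.1 wl.2 s r z / ε))
          - repot ℓ φ E wl.1 wl.2 s r (fun i => ytrain s i)) := fun s r =>
    (convexOn_mul_log_sum_exp_div_sub_apply hε.le fun i : ↥r => ytrain s i).comp_of_map_add_smul
      fun x y _ _ hab => repot_smul_add_smul ℓ φ E hab x.1 y.1 x.2 y.2 s r
  have hregularizer : ConvexOn ℝ univ
      (fun wl : (K → ℝ) × (S → (r p : Finset V) → (↥r → L) → ℝ) => C / 2 * ∑ k, wl.1 k ^ 2) :=
    (convexOn_finset_sum univ (fun k _ => even_two.convexOn_pow.comp_of_map_add_smul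
      fun _ _ _ _ _ => rfl) convex_univ).smul (by positivity)
  exact (convexOn_finset_sum univ (fun s _ => convexOn_finset_sum 𝓡 (fun r _ => hregion s r)
    convex_univ) convex_univ).add hregularizer

/-- The low-dimensional structured prediction objective `J(w,λ)` is a
jointly convex function of `(w, λ)` on all of `ℝ^K ×` (message space). -/
theorem J_convexOn [Fintype V] [Nonempty V] [Fintype S] [Nonempty S]
    (𝓡 : Finset (Finset V))
    (E : Finset (Finset V × Finset V))
    (hE : ∀ e ∈ E, e.1 ∈ 𝓡 ∧ e.2 ∈ 𝓡 ∧ e.1 ⊂ e.2)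
    (ε C : ℝ) (hε : 0 < ε) (hC : 0 ≤ C)
    (ℓ : S → (r : Finset V) → (↥r → L) → ℝ)
    (ytrain : S → V → L)
    (φ : K → S → (r : Finset V) → (↥r → L) → ℝ) :
    ConvexOn ℝ Set.univ
      (fun wl : (K → ℝ) × (S → (r p : Finset V) → (↥r → L) → ℝ) =>
        J ℓ ytrain φ E 𝓡 ε C wl.1 wl.2) :=
  J_convexOn_general 𝓡 E ε C hε hC ℓ ytrain φ

end Stmt17
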